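/- arXiv:1909.11326 — 12 statements merged into one kernel-verified Lean document; each statement's English description precedes it below -/
import Mathlib

section
/- Let p be a prime and n, n' positive integers with n' not dividing n necessarily. If L(X) = X^{p^{n'}} - λ(X) ∈ F_{p^n}[X] splits completely over F_{p^n} and ℓ := log_p(deg λ) > 0, then ⌊n/n'⌋·ℓ + (n mod n') ≥ n'. -/
/-!
Every root `a` of `L` satisfies `a ^ p ^ n' = λ(a)`. Twisting the coefficients of `λ` by powers
of Frobenius and composing, one gets a polynomial `μ` of degree `p ^ (qℓ)` with
`μ(a) = a ^ p ^ (q n')` at every root, where `n = q n' + r`. Since `a ^ p ^ n = a`, all `p ^ n'`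
roots of `L` are roots of `μ ^ p ^ r - X`, a nonzero polynomial of degree `p ^ (qℓ + r)`.
-/

open Polynomial

namespace Polynomial

section TwistedIterate

variable {R : Type*} [CommRing R] (p : ℕ) [ExpChar R p]

/-- Where `a ^ p ^ m = lam.eval a`, the `k`-th term evaluates to `a ^ p ^ (k * m)`, because
`lam` with coefficients raised to the `p ^ (k * m)`-th power sends `a ^ p ^ (k * m)` to
`(lam.eval a) ^ p ^ (k * m)`. -/
noncomputable def twistedIterate (m : ℕ) (lam : R[X]) : ℕ → R[X]
  | 0 => X
  | k + 1 => (lam.map (iterateFrobenius R p (k * m))).comp (twistedIterate m lam k)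

theorem eval_twistedIterate {m : ℕ} {lam : R[X]} {a : R} (ha : a ^ p ^ m = lam.eval a) (k : ℕ) :
    (twistedIterate p m lam k).eval a = a ^ p ^ (k * m) := by
  induction k with
  | zero => simp [twistedIterate]
  | succ k ih =>
    rw [twistedIterate, eval_comp, ih, ← iterateFrobenius_def, eval_map, eval₂_at_apply,
      iterateFrobenius_def, ← ha, ← pow_mul, ← pow_add, add_one_mul, add_comm]

theorem natDegree_twistedIterate [IsDomain R] (m : ℕ) (lam : R[X]) (k : ℕ) :
    (twistedIterate p m lam k).natDegree = lam.natDegree ^ k := by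
  induction k with
  | zero => simp [twistedIterate]
  | succ k ih =>
    rw [twistedIterate, natDegree_comp, natDegree_map_eq_of_injective (iterateFrobenius_inj R p _),
      ih, pow_succ']

end TwistedIterate

theorem ncard_setOf_pow_eq_eval_le {K : Type*} [Field K] [Finite K] (p : ℕ) [ExpChar K p]
    {m q r : ℕ} (hK : Nat.card K = p ^ (q * m + r)) (lam : K[X])
    (hdeg : 1 < lam.natDegree ^ q * p ^ r) :
    {a : K | a ^ p ^ m = lam.eval a}.ncard ≤ lam.natDegree ^ q * p ^ r := by
  have := Fintype.ofFinite K
  set G := twistedIterate p m lam q ^ p ^ r - X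
  have hG : G.natDegree = lam.natDegree ^ q * p ^ r := by
    have hpow : (twistedIterate p m lam q ^ p ^ r).natDegree = lam.natDegree ^ q * p ^ r := by
      rw [natDegree_pow, natDegree_twistedIterate, mul_comm]
    rw [natDegree_sub_eq_left_of_natDegree_lt (by rwa [hpow, natDegree_X]), hpow]
  have hG0 : G ≠ 0 := by
    rintro h
    rw [h, natDegree_zero] at hG
    omega
  have hsub : {a : K | a ^ p ^ m = lam.eval a} ⊆ G.rootSet K := by
    intro a ha
    rw [mem_rootSet_of_ne hG0, coe_aeval_eq_eval, eval_sub, eval_pow,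
      eval_twistedIterate p ha, eval_X, ← pow_mul, ← pow_add, ← hK, Nat.card_eq_fintype_card,
      FiniteField.pow_card, sub_self]
  calc {a : K | a ^ p ^ m = lam.eval a}.ncard ≤ (G.rootSet K).ncard :=
        Set.ncard_le_ncard hsub (rootSet_finite G K)
    _ ≤ G.natDegree := ncard_rootSet_le G K
    _ = lam.natDegree ^ q * p ^ r := hG

end Polynomial

theorem stmt_0_general (p n n' ℓ : ℕ) [Fact p.Prime] (hn : 0 < n) (hℓ : 0 < ℓ)
    (lam : Polynomial (GaloisField p n)) (hdeg : lam.natDegree = p ^ ℓ)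
    (L : Polynomial (GaloisField p n))
    (hL : L = Polynomial.X ^ (p ^ n') - lam)
    (hroots : {x : GaloisField p n | Polynomial.eval x L = 0}.ncard = p ^ n') :
    (n / n') * ℓ + (n % n') ≥ n' := by
  have hp : 1 < p := (Fact.out : p.Prime).one_lt
  have hroots_eq : {x : GaloisField p n | L.eval x = 0} = {a | a ^ p ^ n' = lam.eval a} := by
    ext a
    simp [hL, sub_eq_zero]
  have hcard : Nat.card (GaloisField p n) = p ^ (n / n' * n' + n % n') := by
    rw [Nat.div_add_mod', GaloisField.card p n hn.ne']
  have hpos : 0 < n / n' * ℓ + n % n' := by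
    rcases (n / n').eq_zero_or_pos with hq | hq
    · have hr : n % n' = n := by simpa [hq] using Nat.div_add_mod' n n'
      omega
    · exact Nat.lt_add_right _ (Nat.mul_pos hq hℓ)
  have hdeg' : lam.natDegree ^ (n / n') * p ^ (n % n') = p ^ (n / n' * ℓ + n % n') := by
    rw [hdeg, ← pow_mul, ← pow_add, mul_comm]
  have hle := ncard_setOf_pow_eq_eval_le p hcard lam
    (by rw [hdeg']; exact Nat.one_lt_pow hpos.ne' hp)
  rw [← hroots_eq, hroots, hdeg'] at hle
  exact (Nat.pow_le_pow_iff_right hp).mp hle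

theorem stmt_0 (p n n' ℓ : ℕ) [Fact p.Prime] (hn : 0 < n) (hn' : 0 < n') (hℓ : 0 < ℓ)
    (lam : Polynomial (GaloisField p n)) (hdeg : lam.natDegree = p ^ ℓ)
    (L : Polynomial (GaloisField p n))
    (hL : L = Polynomial.X ^ (p ^ n') - lam)
    (hroots : {x : GaloisField p n | Polynomial.eval x L = 0}.ncard = p ^ n') :
    (n / n') * ℓ + (n % n') ≥ n' :=
  stmt_0_general p n n' ℓ hn hℓ lam hdeg L hL hroots
end

section
/- Let p be prime and let f ∈ F_p[X] be a monic polynomial with f(0) ≠ 0. The linearized polynomial L_f (obtained by replacing X^i with X^{p^i} in f) splits completely over F_{p^n} if and only if f divides X^n - 1 in F_p[X]. -/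
/-!
Over `K = 𝔽_q`, Frobenius `φ x = x ^ q` is a `K`-linear endomorphism of `L` with
`L_f(x) = f(φ)(x)`, so the roots of `L_f` form the subspace `ker f(φ)`, of dimension at most
`deg f` because `L_f ≠ 0` has degree `q ^ deg f`. Since `φ ^ n = 1` for `n = [L : K]`, a
factorisation `f g = X ^ n - 1` gives `n ≤ dim ker f(φ) + dim ker g(φ)`, which forces
`dim ker f(φ) = deg f`. Conversely, Bézout gives `ker f(φ) ⊆ ker d(φ)` for
`d = gcd(f, X ^ n - 1)`, so `deg f ≤ dim ker d(φ) ≤ deg d`, hence `f ∣ d`.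
-/

open Polynomial Module LinearMap FiniteField

section LinearAlgebra

variable {K V : Type*} [Field K] [AddCommGroup V] [Module K V]

lemma Submodule.ncard_coe_eq_card_pow_finrank [Fintype K] [Finite V] (W : Submodule K V) :
    (W : Set V).ncard = Fintype.card K ^ finrank K W := by
  rw [← Nat.card_coe_set_eq, SetLike.coe_sort_coe, natCard_eq_pow_finrank (K := K),
    Nat.card_eq_fintype_card]

lemma finrank_le_finrank_ker_add_finrank_ker_of_mul_eq_zero [FiniteDimensional K V]
    {A B : End K V} (hAB : A * B = 0) :
    finrank K V ≤ finrank K (ker A) + finrank K (ker B) := by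
  have hrange : finrank K (range B) ≤ finrank K (ker A) :=
    Submodule.finrank_mono (range_le_ker_iff.mpr hAB)
  have := finrank_range_add_finrank_ker B
  omega

lemma ker_aeval_le_ker_aeval_gcd [DecidableEq K] (T : End K V) {m : K[X]} (hm : aeval T m = 0)
    (f : K[X]) :
    ker (aeval T f) ≤ ker (aeval T (EuclideanDomain.gcd f m)) := by
  intro x hx
  rw [mem_ker] at hx ⊢
  rw [EuclideanDomain.gcd_eq_gcd_ab, mul_comm f, map_add, map_mul, map_mul, hm, zero_mul, add_zero,
    Module.End.mul_apply, hx, map_zero]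

theorem finrank_ker_aeval_eq_natDegree_iff [FiniteDimensional K V] (T : End K V) {m : K[X]}
    (hm0 : m ≠ 0) (hm : aeval T m = 0) (hdeg : m.natDegree ≤ finrank K V)
    (hbound : ∀ g : K[X], g ≠ 0 → finrank K (ker (aeval T g)) ≤ g.natDegree)
    {f : K[X]} (hf : f ≠ 0) :
    finrank K (ker (aeval T f)) = f.natDegree ↔ f ∣ m := by
  classical
  constructor
  · intro h
    have hd0 : EuclideanDomain.gcd f m ≠ 0 := fun h0 =>
      hf (EuclideanDomain.gcd_eq_zero_iff.mp h0).1
    have hle : f.natDegree ≤ (EuclideanDomain.gcd f m).natDegree :=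
      h ▸ (Submodule.finrank_mono (ker_aeval_le_ker_aeval_gcd T hm f)).trans (hbound _ hd0)
    have hassoc := associated_of_dvd_of_natDegree_le (EuclideanDomain.gcd_dvd_left f m) hf hle
    exact hassoc.dvd_iff_dvd_left.mp (EuclideanDomain.gcd_dvd_right f m)
  · rintro ⟨g, rfl⟩
    have hg : g ≠ 0 := right_ne_zero_of_mul hm0
    have hsum := finrank_le_finrank_ker_add_finrank_ker_of_mul_eq_zero
      (A := aeval T f) (B := aeval T g) (by rwa [← map_mul])
    rw [natDegree_mul hf hg] at hdeg
    have hg_le := hbound g hg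
    exact le_antisymm (hbound f hf) (by omega)

end LinearAlgebra

section Frobenius

variable {K : Type*} (L : Type*) [Field K] [Fintype K] [Field L] [Algebra K L]

noncomputable def linearizedPoly (f : K[X]) : L[X] :=
  ∑ i ∈ Finset.range (f.natDegree + 1), C (algebraMap K L (f.coeff i)) * X ^ Fintype.card K ^ i

lemma frobeniusAlgHom_toLinearMap_pow_apply (i : ℕ) (x : L) :
    ((frobeniusAlgHom K L).toLinearMap ^ i) x = x ^ Fintype.card K ^ i := by
  rw [Module.End.pow_apply, AlgHom.coe_toLinearMap, coe_frobeniusAlgHom, pow_iterate]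

variable {L}

lemma eval_linearizedPoly (f : K[X]) (x : L) :
    (linearizedPoly L f).eval x = aeval (frobeniusAlgHom K L).toLinearMap f x := by
  rw [linearizedPoly, aeval_eq_sum_range, LinearMap.sum_apply, eval_finsetSum]
  refine Finset.sum_congr rfl fun i _ => ?_
  rw [LinearMap.smul_apply, frobeniusAlgHom_toLinearMap_pow_apply, Algebra.smul_def]
  simp

lemma coeff_linearizedPoly_card_pow_natDegree (f : K[X]) :
    (linearizedPoly L f).coeff (Fintype.card K ^ f.natDegree) =
      algebraMap K L f.leadingCoeff := by
  rw [linearizedPoly, finsetSum_coeff, Finset.sum_eq_single f.natDegree]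
  · simp [coeff_C_mul, coeff_X_pow]
  · intro i _ hne
    have : Fintype.card K ^ f.natDegree ≠ Fintype.card K ^ i :=
      (Nat.pow_right_injective Fintype.one_lt_card).ne (Ne.symm hne)
    simp [coeff_C_mul, coeff_X_pow, this]
  · simp

lemma linearizedPoly_ne_zero {f : K[X]} (hf : f ≠ 0) : linearizedPoly L f ≠ 0 := by
  intro h
  have := coeff_linearizedPoly_card_pow_natDegree (L := L) f
  rw [h, coeff_zero, eq_comm, map_eq_zero_iff _ (algebraMap K L).injective] at this
  exact hf (leadingCoeff_eq_zero.mp this)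

lemma natDegree_linearizedPoly_le (f : K[X]) :
    (linearizedPoly L f).natDegree ≤ Fintype.card K ^ f.natDegree := by
  refine natDegree_sum_le_of_forall_le _ _ fun i hi => (natDegree_C_mul_le _ _).trans ?_
  rw [natDegree_X_pow]
  exact Nat.pow_le_pow_right Fintype.card_pos (Nat.lt_succ_iff.mp (Finset.mem_range.mp hi))

lemma setOf_eval_linearizedPoly_eq_zero (f : K[X]) :
    {x : L | (linearizedPoly L f).eval x = 0} =
      ker (aeval (frobeniusAlgHom K L).toLinearMap f) := by
  ext x
  simp [eval_linearizedPoly]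

variable [Finite L]

lemma finrank_ker_aeval_frobenius_le {f : K[X]} (hf : f ≠ 0) :
    finrank K (ker (aeval (frobeniusAlgHom K L).toLinearMap f)) ≤ f.natDegree := by
  refine (Nat.pow_le_pow_iff_right (Fintype.one_lt_card (α := K))).mp ?_
  rw [← Submodule.ncard_coe_eq_card_pow_finrank, ← setOf_eval_linearizedPoly_eq_zero]
  calc {x : L | (linearizedPoly L f).eval x = 0}.ncard
      ≤ ((linearizedPoly L f).rootSet L).ncard := by
        refine Set.ncard_le_ncard (fun x hx => ?_) (rootSet_finite _ _)
        rw [mem_rootSet, coe_aeval_eq_eval]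
        exact ⟨linearizedPoly_ne_zero hf, hx⟩
    _ ≤ (linearizedPoly L f).natDegree := ncard_rootSet_le _ _
    _ ≤ Fintype.card K ^ f.natDegree := natDegree_linearizedPoly_le f

lemma aeval_frobenius_X_pow_finrank_sub_one :
    aeval (frobeniusAlgHom K L).toLinearMap (X ^ finrank K L - 1 : K[X]) = 0 := by
  have := Fintype.ofFinite L
  ext x
  rw [map_sub, map_pow, aeval_X, map_one, LinearMap.sub_apply,
    frobeniusAlgHom_toLinearMap_pow_apply, ← card_eq_pow_finrank (K := K) (V := L), pow_card,
    Module.End.one_apply, sub_self, LinearMap.zero_apply]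

theorem ncard_setOf_eval_linearizedPoly_eq_zero_iff {f : K[X]} (hf : f ≠ 0) :
    {x : L | (linearizedPoly L f).eval x = 0}.ncard = Fintype.card K ^ f.natDegree ↔
      f ∣ X ^ finrank K L - 1 := by
  have hm : (X ^ finrank K L - 1 : K[X]).natDegree = finrank K L := by
    rw [← C_1, natDegree_X_pow_sub_C]
  have hm0 : (X ^ finrank K L - 1 : K[X]) ≠ 0 :=
    ne_zero_of_natDegree_gt (hm.symm ▸ (finrank_pos : 0 < finrank K L))
  rw [setOf_eval_linearizedPoly_eq_zero, Submodule.ncard_coe_eq_card_pow_finrank,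
    (Nat.pow_right_injective (Fintype.one_lt_card (α := K))).eq_iff]
  exact finrank_ker_aeval_eq_natDegree_iff (frobeniusAlgHom K L).toLinearMap hm0
    aeval_frobenius_X_pow_finrank_sub_one hm.le (fun _ => finrank_ker_aeval_frobenius_le) hf

end Frobenius

theorem stmt_1_general (p n : ℕ) [Fact p.Prime] (hn : 0 < n)
    (f : Polynomial (ZMod p)) (hf : f.Monic) :
    ({x : GaloisField p n |
        Polynomial.eval x (∑ i ∈ Finset.range (f.natDegree + 1),
          Polynomial.C (algebraMap (ZMod p) (GaloisField p n) (f.coeff i)) *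
            Polynomial.X ^ (p ^ i)) = 0}.ncard = p ^ f.natDegree)
      ↔ f ∣ Polynomial.X ^ n - 1 := by
  have := ncard_setOf_eval_linearizedPoly_eq_zero_iff (L := GaloisField p n) hf.ne_zero
  rwa [linearizedPoly, ZMod.card, GaloisField.finrank p hn.ne'] at this

theorem stmt_1 (p n : ℕ) [Fact p.Prime] (hn : 0 < n)
    (f : Polynomial (ZMod p)) (hf : f.Monic) (h0 : f.coeff 0 ≠ 0) :
    ({x : GaloisField p n |
        Polynomial.eval x (∑ i ∈ Finset.range (f.natDegree + 1),
          Polynomial.C (algebraMap (ZMod p) (GaloisField p n) (f.coeff i)) *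
            Polynomial.X ^ (p ^ i)) = 0}.ncard = p ^ f.natDegree)
      ↔ f ∣ Polynomial.X ^ n - 1 :=
  stmt_1_general p n hn f hf
end

section
/- Let p be prime and f, g ∈ F_p[X] monic. The linearized polynomial L_f divides L_g (as a polynomial) if and only if f divides g in F_p[X]. -/
/-
Let `φ` be the Frobenius `q ↦ q ^ p` on `𝔽_p[X]`, an `𝔽_p`-linear endomorphism. Evaluating `f` at
`φ` gives the operator `q ↦ L_f ∘ q`, so `L_f = f(φ) X` and `L_{fg} = f(φ) (g(φ) X) = L_f ∘ L_g`.
As `X ∣ L_h`, this makes `L_f ∣ L_{hf}`, which gives one direction. Conversely, writing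
`g = r + h f` with `deg r < deg f`, the map `f ↦ L_f` is additive, so `L_f ∣ L_r`; but
`deg L_r ≤ p ^ deg r < p ^ deg f = deg L_f`, hence `L_r = 0` and so `r = 0`.
-/

/-- The linearized polynomial associated to `f`: replace `X^i` by `X^(p^i)`. -/
noncomputable def linearized (p : ℕ) (f : Polynomial (ZMod p)) : Polynomial (ZMod p) :=
  ∑ i ∈ Finset.range (f.natDegree + 1), Polynomial.C (f.coeff i) * Polynomial.X ^ (p ^ i)

open Polynomial

theorem Polynomial.dvd_comp_of_X_dvd {R : Type*} [CommSemiring R] {f g : R[X]} (h : X ∣ f) :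
    g ∣ f.comp g := by
  obtain ⟨f, rfl⟩ := h
  rw [mul_comp, X_comp]
  exact dvd_mul_right g _

section Linearized

variable {p : ℕ} [hp : Fact p.Prime]

variable (p) in
noncomputable abbrev frobeniusEnd : Module.End (ZMod p) (ZMod p)[X] :=
  (FiniteField.frobeniusAlgHom (ZMod p) (ZMod p)[X]).toLinearMap

theorem frobeniusEnd_pow_apply (n : ℕ) (q : (ZMod p)[X]) : (frobeniusEnd p ^ n) q = q ^ p ^ n := by
  rw [Module.End.pow_apply, AlgHom.coe_toLinearMap, FiniteField.coe_frobeniusAlgHom, pow_iterate,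
    ZMod.card]

theorem aeval_frobeniusEnd_apply (f q : (ZMod p)[X]) :
    aeval (frobeniusEnd p) f q = (linearized p f).comp q := by
  simp only [aeval_eq_sum_range, LinearMap.sum_apply, LinearMap.smul_apply,
    frobeniusEnd_pow_apply, linearized, sum_comp, mul_comp, C_comp, X_pow_comp, smul_eq_C_mul]

theorem linearized_eq_aeval_frobeniusEnd (f : (ZMod p)[X]) :
    linearized p f = aeval (frobeniusEnd p) f X := by
  rw [aeval_frobeniusEnd_apply, comp_X]

theorem linearized_add (f g : (ZMod p)[X]) :
    linearized p (f + g) = linearized p f + linearized p g := by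
  simp only [linearized_eq_aeval_frobeniusEnd, map_add, LinearMap.add_apply]

theorem linearized_mul (f g : (ZMod p)[X]) :
    linearized p (f * g) = (linearized p f).comp (linearized p g) := by
  rw [linearized_eq_aeval_frobeniusEnd, map_mul, Module.End.mul_apply,
    ← linearized_eq_aeval_frobeniusEnd, aeval_frobeniusEnd_apply]

theorem X_dvd_linearized (f : (ZMod p)[X]) : X ∣ linearized p f :=
  Finset.dvd_sum fun _ _ => dvd_mul_of_dvd_right (dvd_pow_self X (pow_ne_zero _ hp.out.ne_zero)) _

theorem linearized_dvd_linearized_mul (f g : (ZMod p)[X]) :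
    linearized p f ∣ linearized p (g * f) := by
  rw [linearized_mul]
  exact dvd_comp_of_X_dvd (X_dvd_linearized g)

theorem linearized_dvd_linearized_of_dvd {f g : (ZMod p)[X]} (h : f ∣ g) :
    linearized p f ∣ linearized p g := by
  obtain ⟨h, rfl⟩ := h
  rw [mul_comm]
  exact linearized_dvd_linearized_mul f h

theorem coeff_linearized_pow (f : (ZMod p)[X]) (n : ℕ) :
    (linearized p f).coeff (p ^ n) = f.coeff n := by
  simp only [linearized, finsetSum_coeff, coeff_C_mul, coeff_X_pow,
    (Nat.pow_right_injective hp.out.two_le).eq_iff, mul_ite, mul_one, mul_zero,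
    Finset.sum_ite_eq, Finset.mem_range, Nat.lt_succ_iff]
  exact ite_eq_left_iff.2 fun h => (coeff_eq_zero_of_natDegree_lt (not_le.1 h)).symm

theorem linearized_eq_zero_iff {f : (ZMod p)[X]} : linearized p f = 0 ↔ f = 0 := by
  refine ⟨fun h => ext fun n => ?_, fun h => by simp [h, linearized]⟩
  rw [← coeff_linearized_pow, h, coeff_zero, coeff_zero]

theorem natDegree_linearized_le (f : (ZMod p)[X]) :
    (linearized p f).natDegree ≤ p ^ f.natDegree := by
  refine natDegree_sum_le_of_forall_le _ _ fun i hi => (natDegree_C_mul_le _ _).trans ?_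
  rw [natDegree_X_pow]
  exact Nat.pow_le_pow_right hp.out.pos (Nat.lt_succ_iff.1 (Finset.mem_range.1 hi))

theorem natDegree_linearized {f : (ZMod p)[X]} (hf : f ≠ 0) :
    (linearized p f).natDegree = p ^ f.natDegree := by
  refine natDegree_eq_of_le_of_coeff_ne_zero (natDegree_linearized_le f) ?_
  rwa [coeff_linearized_pow, coeff_natDegree, leadingCoeff_ne_zero]

theorem natDegree_linearized_lt {f g : (ZMod p)[X]} (h : g.degree < f.degree) :
    (linearized p g).natDegree < (linearized p f).natDegree := by
  rw [natDegree_linearized (ne_zero_of_degree_gt h)]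
  rcases eq_or_ne g 0 with rfl | hg
  · simpa [linearized_eq_zero_iff.2 rfl] using pow_pos hp.out.pos _
  · exact (natDegree_linearized_le g).trans_lt
      (Nat.pow_lt_pow_right hp.out.one_lt (natDegree_lt_natDegree hg h))

end Linearized

theorem stmt_2_general (p : ℕ) [Fact p.Prime] (f g : Polynomial (ZMod p))
    (hf : f.Monic) :
    linearized p f ∣ linearized p g ↔ f ∣ g := by
  refine ⟨fun h => ?_, linearized_dvd_linearized_of_dvd⟩
  have hsplit : linearized p g = linearized p (g %ₘ f) + linearized p (g /ₘ f * f) := by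
    rw [← linearized_add, mul_comm, modByMonic_add_div g f]
  have hrem : linearized p f ∣ linearized p (g %ₘ f) := by
    rw [hsplit] at h
    exact (dvd_add_left (linearized_dvd_linearized_mul f (g /ₘ f))).1 h
  rw [← modByMonic_eq_zero_iff_dvd hf, ← linearized_eq_zero_iff (p := p)]
  exact eq_zero_of_dvd_of_natDegree_lt hrem (natDegree_linearized_lt (degree_modByMonic_lt g hf))

theorem stmt_2 (p : ℕ) [Fact p.Prime] (f g : Polynomial (ZMod p))
    (hf : f.Monic) (hg : g.Monic) :
    linearized p f ∣ linearized p g ↔ f ∣ g :=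
  stmt_2_general p f g hf
end

section
/- Let p be prime and L = X^{p^{n'}} - (a_ℓ X^{p^ℓ} + ... + a_0 X) a linearized polynomial over F_{p^n} with 1 ≤ ℓ < n' and a_ℓ ≠ 0. If L splits completely over F_{p^n}, then n ≥ n' + (n'-ℓ)·⌊(n'-1)/ℓ⌋. -/
/-!
On the `p ^ n'` roots of `L` we have `x ^ p ^ n = x`. Rewriting `x ^ p ^ n` from the top with
`x ^ p ^ (n' + j) = ∑ i, a i ^ p ^ j * x ^ p ^ (i + j)` divides `X ^ p ^ n` by `L` under
composition and leaves `x ^ p ^ n = ∑_{d < u ≤ n} ρ u * x ^ p ^ (n - u)` on the roots, where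
`d = n - n'`. A nonzero polynomial of degree `< p ^ n'` cannot vanish at all roots, so `ρ u = 0`
for `d < u < n`. The quotient coefficients `R t`, counted from the top, satisfy a recursion with
lags `n' - i ∈ [n' - ℓ, n']`: hence `R` vanishes off the sums of such lags, and
`R (s * (n' - ℓ)) ≠ 0` for `s * ℓ < n'`, since only the lag `n' - ℓ` reaches it. If
`d < k * (n' - ℓ)` with `k = (n' - 1) / ℓ`, the first multiple `u` of `n' - ℓ` above `d` has
`ρ u = R u ≠ 0`.
-/

open Finset Polynomial

section LagSeq

variable {K : Type*} [Semiring K] (n' ℓ : ℕ) (w : ℕ → ℕ → K)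

noncomputable def lagSeq : ℕ → K
  | 0 => 1
  | u + 1 => ∑ i ∈ range (ℓ + 1),
      if _ : 0 < n' - i ∧ n' - i ≤ u + 1 then
        w i (u + 1 - (n' - i)) * lagSeq (u + 1 - (n' - i))
      else 0
  decreasing_by omega

def lagSum (R : ℕ → K) (d u : ℕ) : K :=
  ∑ i ∈ range (ℓ + 1),
    if n' - i ≤ u ∧ u - (n' - i) ≤ d then w i (u - (n' - i)) * R (u - (n' - i)) else 0

variable {n' ℓ}

@[simp]
theorem lagSeq_zero : lagSeq n' ℓ w 0 = 1 := by
  rw [lagSeq]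

theorem lagSeq_of_pos (hℓ : ℓ < n') {u : ℕ} (hu : 0 < u) :
    lagSeq n' ℓ w u = ∑ i ∈ range (ℓ + 1),
      if n' - i ≤ u then w i (u - (n' - i)) * lagSeq n' ℓ w (u - (n' - i)) else 0 := by
  obtain ⟨u, rfl⟩ := Nat.exists_eq_add_one_of_ne_zero hu.ne'
  rw [lagSeq]
  refine sum_congr rfl fun i hi => ?_
  have : 0 < n' - i := by rw [mem_range] at hi; omega
  simp only [this, true_and, dite_eq_ite]

theorem lagSum_lagSeq (hℓ : ℓ < n') {d u : ℕ} (hu : 0 < u) (hud : u ≤ d + (n' - ℓ)) :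
    lagSum n' ℓ w (lagSeq n' ℓ w) d u = lagSeq n' ℓ w u := by
  rw [lagSeq_of_pos w hℓ hu, lagSum]
  refine sum_congr rfl fun i hi => ?_
  have : u - (n' - i) ≤ d := by rw [mem_range] at hi; omega
  simp only [this, and_true]

/-- A sum of `t` parts from `[n' - ℓ, n']` lies in `[t (n' - ℓ), t n']`; these
intervals leave gaps, where `lagSeq` vanishes. -/
theorem lagSeq_eq_zero_of_gap (hℓ : ℓ < n') {t e : ℕ} (he : e < t * (n' - ℓ))
    (hte : t * n' < e + n') : lagSeq n' ℓ w e = 0 := by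
  induction e using Nat.strong_induction_on generalizing t with
  | _ e ih =>
    cases t with
    | zero => simp at he
    | succ s =>
      rw [add_one_mul] at he hte
      rw [lagSeq_of_pos w hℓ (by omega)]
      refine sum_eq_zero fun i hi => ?_
      rw [mem_range] at hi
      split_ifs
      · rw [ih _ (by omega) (t := s) (by omega) (by omega), mul_zero]
      · rfl

variable [NoZeroDivisors K] [Nontrivial K]

theorem lagSeq_mul_ne_zero (hℓ : ℓ < n') (hw : ∀ t, w ℓ t ≠ 0) {s : ℕ} (hs : s * ℓ < n') :
    lagSeq n' ℓ w (s * (n' - ℓ)) ≠ 0 := by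
  induction s with
  | zero => simp
  | succ s ih =>
    rw [add_one_mul] at hs ⊢
    have hsn : s * n' = s * (n' - ℓ) + s * ℓ := by rw [← mul_add]; congr; omega
    rw [lagSeq_of_pos w hℓ (by omega), sum_eq_single_of_mem ℓ (self_mem_range_succ ℓ)]
    · rw [if_pos (by omega), Nat.add_sub_cancel]
      exact mul_ne_zero (hw _) (ih (by omega))
    · intro i hi hiℓ
      rw [mem_range] at hi
      split_ifs
      · rw [lagSeq_eq_zero_of_gap w hℓ (t := s) (by omega) (by omega), mul_zero]
      · rfl

theorem exists_lagSeq_ne_zero (hℓ : ℓ < n') (hw : ∀ t, w ℓ t ≠ 0) {k d : ℕ} (hk : k * ℓ < n')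
    (hd : d < k * (n' - ℓ)) : ∃ u, d < u ∧ u ≤ d + (n' - ℓ) ∧ lagSeq n' ℓ w u ≠ 0 := by
  have hsk : d / (n' - ℓ) < k := (Nat.div_lt_iff_lt_mul (by omega)).mpr hd
  have hdiv := Nat.div_add_mod' d (n' - ℓ)
  have hmod := Nat.mod_lt d (by omega : 0 < n' - ℓ)
  refine ⟨(d / (n' - ℓ) + 1) * (n' - ℓ), ?_, ?_, lagSeq_mul_ne_zero w hℓ hw ?_⟩
  · rw [add_one_mul]; omega
  · rw [add_one_mul]; omega
  · exact lt_of_le_of_lt (Nat.mul_le_mul_right ℓ hsk) hk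

end LagSeq

theorem eq_zero_of_sum_mul_pow_eq_zero {K ι : Type*} [CommRing K] [IsDomain K] {S : Finset K}
    {s : Finset ι} {γ : ι → K} {f : ι → ℕ} (hf : Set.InjOn f s) (hfS : ∀ i ∈ s, f i < #S)
    (h : ∀ x ∈ S, ∑ i ∈ s, γ i * x ^ f i = 0) : ∀ i ∈ s, γ i = 0 := by
  intro j hj
  set P : K[X] := ∑ i ∈ s, C (γ i) * X ^ f i
  have hdeg : P.natDegree ≤ #S - 1 := natDegree_sum_le_of_forall_le _ _ fun i hi =>
    (natDegree_C_mul_X_pow_le _ _).trans (by have := hfS i hi; omega)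
  have hP : P = 0 := eq_zero_of_natDegree_lt_card_of_eval_eq_zero' P S
    (fun x hx => by simpa [P, eval_finsetSum] using h x hx) (by have := hfS j hj; omega)
  have hcoeff := congrArg (coeff · (f j)) hP
  simp only [P, finsetSum_coeff, coeff_C_mul_X_pow, coeff_zero] at hcoeff
  rwa [sum_eq_single_of_mem j hj fun i hi hij => if_neg fun h => hij (hf hi hj h.symm),
    if_pos rfl] at hcoeff

theorem sum_range_eq_sum_range_shift {M : Type*} [AddCommMonoid M] (f : ℕ → M) {d k N : ℕ}
    (h : d + k ≤ N) :
    ∑ t ∈ range (d + 1), f t =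
      ∑ u ∈ range (N + 1), if k ≤ u ∧ u - k ≤ d then f (u - k) else 0 := by
  rw [← sum_filter]
  refine sum_nbij' (· + k) (· - k) ?_ ?_ ?_ ?_ fun t _ => by rw [Nat.add_sub_cancel]
  all_goals intro t ht; simp only [mem_filter, mem_range] at ht ⊢; omega

theorem pow_pow_add_eq_sum {R : Type*} [CommSemiring R] {p : ℕ} [ExpChar R p] {n' ℓ : ℕ}
    {a : ℕ → R} {x : R} (hx : x ^ p ^ n' = ∑ i ∈ range (ℓ + 1), a i * x ^ p ^ i) (j : ℕ) :
    x ^ p ^ (n' + j) = ∑ i ∈ range (ℓ + 1), a i ^ p ^ j * x ^ p ^ (i + j) := by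
  rw [pow_add, pow_mul, hx, sum_pow_char_pow]
  simp only [mul_pow, ← pow_mul, ← pow_add]

/-- With `w = frobWeight p d a`, `lagSeq n' ℓ w t` is the coefficient of `X ^ p ^ (d - t)` in the
quotient of `X ^ p ^ (d + n')` by `L` under composition, and `lagSum n' ℓ w (lagSeq n' ℓ w) d u`,
for `d < u`, the coefficient of `X ^ p ^ (d + n' - u)` in the remainder. -/
def frobWeight {K : Type*} [Monoid K] (p d : ℕ) (a : ℕ → K) (i t : ℕ) : K := a i ^ p ^ (d - t)

theorem sum_mul_pow_pow_eq_sum_lagSum {K : Type*} [CommSemiring K] {p : ℕ} [ExpChar K p]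
    {n' ℓ : ℕ} (hℓ : ℓ ≤ n') {a : ℕ → K} {x : K}
    (hx : x ^ p ^ n' = ∑ i ∈ range (ℓ + 1), a i * x ^ p ^ i) (R : ℕ → K) (d : ℕ) :
    ∑ t ∈ range (d + 1), R t * x ^ p ^ (n' + (d - t)) =
      ∑ u ∈ range (d + n' + 1),
        lagSum n' ℓ (frobWeight p d a) R d u * x ^ p ^ (d + n' - u) := by
  simp only [pow_pow_add_eq_sum hx, mul_sum, lagSum, frobWeight, sum_mul]
  rw [sum_comm, sum_comm (s := range (d + n' + 1))]
  refine sum_congr rfl fun i hi => ?_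
  rw [mem_range] at hi
  rw [sum_range_eq_sum_range_shift _ (k := n' - i) (N := d + n') (by omega)]
  refine sum_congr rfl fun u _ => ?_
  split_ifs
  · rw [show i + (d - (u - (n' - i))) = d + n' - u by omega]
    ring
  · rw [zero_mul]

theorem pow_pow_eq_sum_lagSum {K : Type*} [CommRing K] {p : ℕ} [ExpChar K p] {n' ℓ : ℕ}
    (hℓ : ℓ < n') {a : ℕ → K} {x : K}
    (hx : x ^ p ^ n' = ∑ i ∈ range (ℓ + 1), a i * x ^ p ^ i) (d : ℕ) :
    x ^ p ^ (d + n') = ∑ u ∈ Ico (d + 1) (d + n' + 1),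
      lagSum n' ℓ (frobWeight p d a) (lagSeq n' ℓ (frobWeight p d a)) d u *
        x ^ p ^ (d + n' - u) := by
  set w := frobWeight p d a
  have key := sum_mul_pow_pow_eq_sum_lagSum hℓ.le hx (lagSeq n' ℓ w) d
  rw [← sum_range_add_sum_Ico _ (by omega : d + 1 ≤ d + n' + 1), sum_range_succ',
    sum_range_succ'] at key
  have hlagSum_zero : lagSum n' ℓ w (lagSeq n' ℓ w) d 0 = 0 :=
    sum_eq_zero fun i hi => if_neg (by rw [mem_range] at hi; omega)
  have hlagSum_succ :
      ∑ t ∈ range d, lagSum n' ℓ w (lagSeq n' ℓ w) d (t + 1) * x ^ p ^ (d + n' - (t + 1)) =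
        ∑ t ∈ range d, lagSeq n' ℓ w (t + 1) * x ^ p ^ (n' + (d - (t + 1))) :=
    sum_congr rfl fun t ht => by
      rw [mem_range] at ht
      rw [lagSum_lagSeq w hℓ t.succ_pos (by omega),
        show d + n' - (t + 1) = n' + (d - (t + 1)) by omega]
  rw [hlagSum_succ, hlagSum_zero, zero_mul, add_zero, lagSeq_zero, one_mul,
    add_right_inj, Nat.sub_zero, add_comm n'] at key
  exact key

theorem lagSum_lagSeq_eq_zero {K : Type*} [CommRing K] [IsDomain K] {p : ℕ} [ExpChar K p]
    (hp : 1 < p) {n' ℓ d : ℕ} (hℓ : ℓ < n') {a : ℕ → K} {S : Finset K} (hS : p ^ n' ≤ #S)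
    (hroot : ∀ x ∈ S, x ^ p ^ n' = ∑ i ∈ range (ℓ + 1), a i * x ^ p ^ i)
    (hfix : ∀ x ∈ S, x ^ p ^ (d + n') = x) {u : ℕ} (hdu : d < u) (hun : u < d + n') :
    lagSum n' ℓ (frobWeight p d a) (lagSeq n' ℓ (frobWeight p d a)) d u = 0 := by
  have hvanish := eq_zero_of_sum_mul_pow_eq_zero (S := S) (s := Ico (d + 1) (d + n' + 1))
    (γ := fun v => lagSum n' ℓ (frobWeight p d a)
      (lagSeq n' ℓ (frobWeight p d a)) d v - if v = d + n' then 1 else 0)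
    (f := fun v => p ^ (d + n' - v))
    (fun v hv v' hv' hvv' => by
      simp only [coe_Ico, Set.mem_Ico] at hv hv'
      have := Nat.pow_right_injective hp hvv'
      omega)
    (fun v hv => (Nat.pow_lt_pow_right hp (by rw [mem_Ico] at hv; omega)).trans_le hS)
    (fun x hx => by
      simp only [sub_mul, sum_sub_distrib, ite_mul, one_mul, zero_mul, sum_ite_eq', mem_Ico]
      rw [← pow_pow_eq_sum_lagSum hℓ (hroot x hx), if_pos (by omega), Nat.sub_self, pow_zero,
        pow_one, hfix x hx, sub_self])
    u (mem_Ico.mpr ⟨hdu, by omega⟩)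
  rwa [if_neg hun.ne, sub_zero] at hvanish

theorem stmt_4 (p n n' ℓ : ℕ) [Fact p.Prime] (hn : 0 < n) (hℓ : 1 ≤ ℓ) (hn' : ℓ < n')
    (a : ℕ → GaloisField p n) (ha : a ℓ ≠ 0)
    (L : Polynomial (GaloisField p n))
    (hL : L = Polynomial.X ^ (p ^ n') -
      ∑ i ∈ Finset.range (ℓ + 1), Polynomial.C (a i) * Polynomial.X ^ (p ^ i))
    (hroots : {x : GaloisField p n | Polynomial.eval x L = 0}.ncard = p ^ n') :
    n ≥ n' + (n' - ℓ) * ((n' - 1) / ℓ) := by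
  classical
  have hp : 1 < p := (Fact.out : p.Prime).one_lt
  let _ : Fintype (GaloisField p n) := Fintype.ofFinite _
  set V := univ.filter fun x : GaloisField p n => L.eval x = 0
  have hV : #V = p ^ n' := by rw [← hroots, ← Set.ncard_coe_finset]; simp [V]
  have hcard : Fintype.card (GaloisField p n) = p ^ n := by
    rw [← Nat.card_eq_fintype_card, GaloisField.card p n hn.ne']
  have hn'n : n' ≤ n := (Nat.pow_le_pow_iff_right hp).mp (hV ▸ hcard ▸ card_le_univ V)
  have hroot (x) (hx : x ∈ V) : x ^ p ^ n' = ∑ i ∈ range (ℓ + 1), a i * x ^ p ^ i := by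
    simpa [V, hL, eval_finsetSum, sub_eq_zero] using hx
  have hfix (x : GaloisField p n) (_ : x ∈ V) : x ^ p ^ (n - n' + n') = x := by
    rw [Nat.sub_add_cancel hn'n, ← hcard, FiniteField.pow_card]
  by_contra! hlt
  obtain ⟨u, hdu, hud, hne⟩ := exists_lagSeq_ne_zero (frobWeight p (n - n') a) hn'
    (fun t => pow_ne_zero _ ha) (k := (n' - 1) / ℓ) (d := n - n')
    ((Nat.div_mul_le_self _ _).trans_lt (by omega)) (by rw [mul_comm]; omega)
  refine hne ?_
  rw [← lagSum_lagSeq _ hn' (by omega) hud]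
  exact lagSum_lagSeq_eq_zero hp hn' hV.ge hroot hfix hdu (by omega)
end

section
/- The linearized polynomial X^{p^2} + X^p + X splits completely over F_{p^3} for every prime p, and its quality parameter β = ℓ·n/n'^2 = 1·3/2^2 equals 3/4. -/
open Polynomial

lemma card_le_of_roots {K : Type*} [Field K] [DecidableEq K] (q : K[X]) (hq : q ≠ 0) (s : Set K)
    (hs : ∀ x ∈ s, q.IsRoot x) : Nat.card s ≤ q.natDegree := by
  have hsub : s ⊆ (q.roots.toFinset : Set K) := by
    intro x hx
    simp only [Finset.mem_coe, Multiset.mem_toFinset]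
    exact (Polynomial.mem_roots hq).2 (hs x hx)
  calc Nat.card s = s.ncard := Nat.card_coe_set_eq s
    _ ≤ (q.roots.toFinset : Set K).ncard :=
        Set.ncard_le_ncard hsub (Set.finite_coe_iff.mp (by infer_instance))
    _ = q.roots.toFinset.card := Set.ncard_coe_finset _
    _ ≤ Multiset.card q.roots := Multiset.toFinset_card_le _
    _ ≤ q.natDegree := Polynomial.card_roots' q

lemma natDegree_X_pow_sub_X {K : Type*} [Field K] (p : ℕ) (hp : 1 < p) :
    (X ^ p - X : K[X]).natDegree = p := by
  rw [Polynomial.natDegree_sub_eq_left_of_natDegree_lt] <;>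
    simp [Polynomial.natDegree_X_pow, hp]

lemma natDegree_lin {K : Type*} [Field K] (p : ℕ) (hp : 1 < p) :
    (X ^ (p^2) + X ^ p + X : K[X]).natDegree = p^2 := by
  have h1 : (X ^ (p^2) + X ^ p : K[X]).natDegree = p^2 := by
    rw [Polynomial.natDegree_add_eq_left_of_natDegree_lt] <;>
      simp [Polynomial.natDegree_X_pow]
    calc p = p^1 := (pow_one p).symm
      _ < p^2 := Nat.pow_lt_pow_right hp one_lt_two
  rw [Polynomial.natDegree_add_eq_left_of_natDegree_lt, h1]
  rw [h1]
  simp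
  nlinarith

theorem stmt_6 (p : ℕ) [Fact p.Prime] :
    ({x : GaloisField p 3 |
        Polynomial.eval x
          (Polynomial.X ^ (p ^ 2) + Polynomial.X ^ p + Polynomial.X :
            Polynomial (GaloisField p 3)) = 0}.ncard = p ^ 2) ∧
      ((1 : ℚ) * 3 / (2 : ℚ) ^ 2 = 3 / 4) := by
  classical
  have hp := (Fact.out : p.Prime)
  have hp1 : 1 < p := hp.one_lt
  refine ⟨?_, by norm_num⟩
  set F := GaloisField p 3
  -- the additive map
  let f : F →+ F := ((frobenius F p).comp (frobenius F p)).toAddMonoidHom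
      + (frobenius F p).toAddMonoidHom + AddMonoidHom.id F
  have hf : ∀ x : F, f x = x ^ p ^ 2 + x ^ p + x := by
    intro x
    simp [f, frobenius_def, pow_mul, sq]
  -- the set equals the kernel of f
  have hset : {x : F |
      Polynomial.eval x
        (Polynomial.X ^ (p ^ 2) + Polynomial.X ^ p + Polynomial.X :
          Polynomial F) = 0} = (f.ker : Set F) := by
    ext x
    simp [AddMonoidHom.mem_ker, hf]
  rw [hset, ← Nat.card_coe_set_eq]
  have hcardF : Nat.card F = p ^ 3 := GaloisField.card p 3 (by norm_num)
  have hfin : Finite F := Nat.finite_of_card_ne_zero (by rw [hcardF]; positivity)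
  have hft : Fintype F := Fintype.ofFinite F
  have hpow : ∀ x : F, x ^ p ^ 3 = x := by
    intro x
    have := FiniteField.pow_card x
    rwa [Fintype.card_eq_nat_card, hcardF] at this
  -- range of f consists of roots of X^p - X
  have hrange : ∀ y ∈ (f.range : Set F), (X ^ p - X : F[X]).IsRoot y := by
    rintro y ⟨x, rfl⟩
    have hy : (f x) ^ p = f x := by
      rw [hf]
      have h1 : (x ^ p ^ 2 + x ^ p + x) ^ p
          = x ^ p ^ 3 + x ^ p ^ 2 + x ^ p := by
        rw [add_pow_char, add_pow_char, ← pow_mul, ← pow_mul]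
        ring_nf
        abel
      rw [h1, hpow x]; abel
    simp [Polynomial.IsRoot, hy]
  have hq : (X ^ p - X : F[X]) ≠ 0 := by
    intro h
    have := natDegree_X_pow_sub_X (K := F) p hp1
    rw [h] at this
    simp at this
    omega
  have hrange_le : Nat.card (f.range : Set F) ≤ p := by
    have := card_le_of_roots (X ^ p - X : F[X]) hq (f.range : Set F) hrange
    rwa [natDegree_X_pow_sub_X p hp1] at this
  -- kernel consists of roots of the linearized polynomial
  have hP : (X ^ (p^2) + X ^ p + X : F[X]) ≠ 0 := by
    intro h
    have := natDegree_lin (K := F) p hp1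
    rw [h] at this
    simp at this
    nlinarith
  have hker_le : Nat.card (f.ker : Set F) ≤ p ^ 2 := by
    have := card_le_of_roots (X ^ (p^2) + X ^ p + X : F[X]) hP (f.ker : Set F)
      (by intro x hx
          have : f x = 0 := hx
          simp [Polynomial.IsRoot, ← hf, this])
    rwa [natDegree_lin p hp1] at this
  have hmul : Nat.card f.range * Nat.card f.ker = p ^ 3 := by
    have h1 := AddSubgroup.card_eq_card_quotient_mul_card_addSubgroup f.ker
    rw [hcardF] at h1
    rw [h1]
    congr 1
    exact (Nat.card_congr (QuotientAddGroup.quotientKerEquivRange f).toEquiv).symm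
  have h1 : Nat.card (f.range : Set F) = Nat.card f.range := rfl
  have h2 : Nat.card (f.ker : Set F) = Nat.card f.ker := rfl
  rw [h2]
  rw [h1] at hrange_le
  rw [h2] at hker_le
  have hge : p ^ 2 ≤ Nat.card f.ker := by
    by_contra h
    push_neg at h
    have hlt : Nat.card f.range * Nat.card f.ker < p * p ^ 2 := by
      calc Nat.card f.range * Nat.card f.ker ≤ p * Nat.card f.ker :=
            Nat.mul_le_mul_right _ hrange_le
        _ < p * p ^ 2 := (Nat.mul_lt_mul_left hp.pos).2 h
    rw [hmul] at hlt
    have : p * p ^ 2 = p ^ 3 := by ring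
    omega
  exact le_antisymm hker_le hge
end

section
/- Let p be prime, f ∈ F_p[X] monic of degree n' dividing X^n - 1 with n' < n, and write f = X^{n'} + a_ℓ X^ℓ + lower terms (with a_ℓ ≠ 0 the second-highest nonzero coefficient). Let g = (X^n - 1)/f = X^{n-n'} + b_r X^r + lower terms (b_r ≠ 0 the second-highest nonzero coefficient). Then r + n' = n - n' + ℓ. -/
/-!
Write `m = n - n'`. If `r + n' > m + ℓ`, then in `f * g` the only product of coefficients
landing in degree `n' + r` is `1 · b_r`: every other pair either uses a coefficient of `f`
in its gap `(ℓ, n')` or forces a degree of `g` above `m`. So `X ^ n - 1` would have the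
nonzero coefficient `b_r` in degree `0 < n' + r < n`. The case `r + n' < m + ℓ` is
symmetric, with `a_ℓ` in degree `m + ℓ`.
-/

open Polynomial

namespace Polynomial

theorem coeff_mul_natDegree_add_of_coeff_eq_zero {R : Type*} [Semiring R] {f g : R[X]}
    {ℓ r : ℕ} (hgap : ∀ i, ℓ < i → i < f.natDegree → f.coeff i = 0)
    (hlt : g.natDegree + ℓ < f.natDegree + r) :
    (f * g).coeff (f.natDegree + r) = f.leadingCoeff * g.coeff r := by
  rw [coeff_mul, Finset.sum_eq_single_of_mem (f.natDegree, r) (by simp)]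
  · rfl
  rintro ⟨i, j⟩ hij hne
  simp only [Finset.HasAntidiagonal.mem_antidiagonal, ne_eq, Prod.mk.injEq] at hij hne ⊢
  rcases lt_trichotomy i f.natDegree with hi | rfl | hi
  · rcases le_or_gt i ℓ with hiℓ | hiℓ
    · rw [coeff_eq_zero_of_natDegree_lt (by omega : g.natDegree < j), mul_zero]
    · rw [hgap i hiℓ hi, zero_mul]
  · omega
  · rw [coeff_eq_zero_of_natDegree_lt hi, zero_mul]

theorem coeff_X_pow_sub_one_of_pos_of_lt {R : Type*} [Ring R] {n k : ℕ} (hk0 : 0 < k)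
    (hkn : k < n) : (X ^ n - 1 : R[X]).coeff k = 0 := by
  simp [coeff_X_pow, coeff_one, hk0.ne', hkn.ne]

end Polynomial

theorem stmt_7_general (p n n' ℓ r : ℕ) (hn : n' < n)
    (f g : Polynomial (ZMod p)) (hf : f.Monic) (hfdeg : f.natDegree = n')
    (hfg : f * g = Polynomial.X ^ n - 1)
    (hℓ : ℓ < n') (hℓne : f.coeff ℓ ≠ 0)
    (hℓtop : ∀ i, ℓ < i → i < n' → f.coeff i = 0)
    (hr : r < n - n') (hrne : g.coeff r ≠ 0)
    (hrtop : ∀ i, r < i → i < n - n' → g.coeff i = 0) :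
    r + n' = n - n' + ℓ := by
  have : Nontrivial (ZMod p) := nontrivial_of_ne _ _ hℓne
  have hXn : (X ^ n - 1 : (ZMod p)[X]).Monic := leadingCoeff_X_pow_sub_one (by omega)
  have hg : g.Monic := hf.of_mul_monic_left (hfg ▸ hXn)
  have hgdeg : g.natDegree = n - n' := by
    have h := congrArg natDegree hfg
    rw [hf.natDegree_mul hg, ← C_1, natDegree_X_pow_sub_C] at h
    omega
  subst hfdeg
  rcases lt_trichotomy (r + f.natDegree) (n - f.natDegree + ℓ) with h | h | h
  · have hcoeff := coeff_mul_natDegree_add_of_coeff_eq_zero (f := g) (g := f)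
      (ℓ := r) (r := ℓ) (by rwa [hgdeg]) (by omega)
    rw [mul_comm, hfg, hg.leadingCoeff, one_mul, hgdeg,
      coeff_X_pow_sub_one_of_pos_of_lt (n := n) (by omega) (by omega)] at hcoeff
    exact absurd hcoeff.symm hℓne
  · exact h
  · have hcoeff := coeff_mul_natDegree_add_of_coeff_eq_zero (g := g) (r := r) hℓtop (by omega)
    rw [hfg, hf.leadingCoeff, one_mul,
      coeff_X_pow_sub_one_of_pos_of_lt (n := n) (by omega) (by omega)] at hcoeff
    exact absurd hcoeff.symm hrne

theorem stmt_7 (p n n' ℓ r : ℕ) [Fact p.Prime] (hn'pos : 1 ≤ n') (hn : n' < n)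
    (f g : Polynomial (ZMod p)) (hf : f.Monic) (hfdeg : f.natDegree = n')
    (hfg : f * g = Polynomial.X ^ n - 1)
    (hℓ : ℓ < n') (hℓne : f.coeff ℓ ≠ 0)
    (hℓtop : ∀ i, ℓ < i → i < n' → f.coeff i = 0)
    (hr : r < n - n') (hrne : g.coeff r ≠ 0)
    (hrtop : ∀ i, r < i → i < n - n' → g.coeff i = 0) :
    r + n' = n - n' + ℓ :=
  stmt_7_general p n n' ℓ r hn f g hf hfdeg hfg hℓ hℓne hℓtop hr hrne hrtop
end

section
/- Let p be prime, q = p^r with r ≥ 1, d ≥ 1. For each a ∈ F_q, define f_a = X^{q^d - 1} + X^{q^{d-1}-1} + ... + X^{q-1} + 1 if a = 0, and f_a = X^{q^d} + ... + X^q + X + a otherwise. Then each f_a divides X^{q^{d+1}-1} - 1 in F_q[X], hence the associated linearized polynomial L_{f_a} splits completely over F_{p^n} with n = q^{d+1} - 1. -/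
/-!
Write `q = p ^ r` and `T = ∑_{i ≤ d} X ^ q ^ i`. In characteristic `p` the Frobenius `x ↦ x ^ q`
is additive, so `T ^ q - T` telescopes to `X ^ q ^ (d + 1) - X`, and for `a ∈ 𝔽_q` (where
`a ^ q = a`) also `T ^ q - T = (T + a) ^ q - (T + a)`, which is divisible by `T + a`.
Finally `X ^ q ^ (d + 1) - X = X * (X ^ (q ^ (d + 1) - 1) - 1)` and `T = X * ∑_{i ≤ d} X ^ (q ^ i - 1)`:
for `a = 0` cancel `X`, and for `a ≠ 0` the polynomial `T + a` is coprime to `X`.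
-/

open Polynomial Finset

section ExpChar

variable {R : Type*} [CommRing R] (p : ℕ) [ExpChar R p]

theorem add_dvd_pow_expChar_pow_sub_self {y : R} (r : ℕ) (hy : y ^ p ^ r = y) (x : R) :
    x + y ∣ x ^ p ^ r - x := by
  have hx : x ^ p ^ r - x = (x + y) ^ p ^ r - (x + y) := by
    rw [add_pow_expChar_pow, hy]; ring
  rw [hx]
  exact dvd_sub (dvd_pow_self _ (expChar_pow_pos R p r).ne') dvd_rfl

theorem sum_pow_pow_expChar_pow_sub_sum (x : R) (r n : ℕ) :
    (∑ i ∈ range n, x ^ (p ^ r) ^ i) ^ p ^ r - ∑ i ∈ range n, x ^ (p ^ r) ^ i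
      = x ^ (p ^ r) ^ n - x := by
  rw [sum_pow_char_pow, ← sum_sub_distrib]
  convert sum_range_sub (fun i => x ^ (p ^ r) ^ i) n using 3 with i
  · rw [← pow_mul, ← pow_succ]
  · rw [pow_zero, pow_one]

theorem sum_pow_pow_add_dvd_pow_pow_sub_self {y : R} (r : ℕ) (hy : y ^ p ^ r = y) (x : R) (n : ℕ) :
    (∑ i ∈ range n, x ^ (p ^ r) ^ i) + y ∣ x ^ (p ^ r) ^ n - x := by
  rw [← sum_pow_pow_expChar_pow_sub_sum p]
  exact add_dvd_pow_expChar_pow_sub_self p r hy _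

end ExpChar

section XPow

variable {R : Type*} [CommRing R]

theorem X_pow_sub_X_eq_X_mul {m : ℕ} (hm : 0 < m) :
    (X : R[X]) ^ m - X = X * (X ^ (m - 1) - 1) := by
  rw [mul_sub, mul_one, ← pow_succ', Nat.sub_add_cancel hm]

theorem sum_X_pow_eq_X_mul {e : ℕ → ℕ} (he : ∀ i, 0 < e i) (n : ℕ) :
    ∑ i ∈ range n, (X : R[X]) ^ e i = X * ∑ i ∈ range n, X ^ (e i - 1) := by
  simp only [mul_sum, ← pow_succ', Nat.sub_add_cancel (he _)]

end XPow

theorem GaloisField.pow_card_eq_self (p : ℕ) [Fact p.Prime] {r : ℕ} (hr : r ≠ 0)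
    (a : GaloisField p r) : a ^ p ^ r = a := by
  have := Fintype.ofFinite (GaloisField p r)
  rw [← GaloisField.card p r hr, Nat.card_eq_fintype_card, FiniteField.pow_card]

open Classical in
theorem stmt_9_general (p r d : ℕ) [Fact p.Prime] (hr : 1 ≤ r) (a : GaloisField p r) :
    (if a = 0 then
        (∑ i ∈ Finset.range (d + 1), Polynomial.X ^ ((p ^ r) ^ i - 1) :
          Polynomial (GaloisField p r))
      else
        (∑ i ∈ Finset.range (d + 1), Polynomial.X ^ (p ^ r) ^ i) + Polynomial.C a)
      ∣ (Polynomial.X ^ ((p ^ r) ^ (d + 1) - 1) - 1 : Polynomial (GaloisField p r)) := by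
  have hq : 0 < p ^ r := pow_pos (Fact.out : p.Prime).pos r
  have key := sum_pow_pow_add_dvd_pow_pow_sub_self p r
    (by rw [← C_pow, GaloisField.pow_card_eq_self p (by omega)] : C a ^ p ^ r = C a) X (d + 1)
  rw [sum_X_pow_eq_X_mul (fun i => pow_pos hq i), X_pow_sub_X_eq_X_mul (pow_pos hq _)] at key
  split_ifs with ha
  · rw [ha, C_0, add_zero] at key
    exact (mul_dvd_mul_iff_left X_ne_zero).mp key
  · have hcop : IsCoprime (X * ∑ i ∈ range (d + 1), X ^ ((p ^ r) ^ i - 1) + C a) X :=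
      (irreducible_X.coprime_iff_not_dvd.mpr (by simpa [X_dvd_iff] using ha)).symm
    rw [sum_X_pow_eq_X_mul (fun i => pow_pos hq i)]
    exact hcop.dvd_of_dvd_mul_left key

open Classical in
theorem stmt_9 (p r d : ℕ) [Fact p.Prime] (hr : 1 ≤ r) (hd : 1 ≤ d) (a : GaloisField p r) :
    (if a = 0 then
        (∑ i ∈ Finset.range (d + 1), Polynomial.X ^ ((p ^ r) ^ i - 1) :
          Polynomial (GaloisField p r))
      else
        (∑ i ∈ Finset.range (d + 1), Polynomial.X ^ (p ^ r) ^ i) + Polynomial.C a)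
      ∣ (Polynomial.X ^ ((p ^ r) ^ (d + 1) - 1) - 1 : Polynomial (GaloisField p r)) :=
  stmt_9_general p r d hr a
end

section
/- Let p be prime, k ≥ 2 and i ≥ 1 integers, n = 2ik, n' = i(2k-1). Then r := (p^n - 1)/(p^{2i} - 1) is an integer, and p^{n'} mod r equals a := (p^{i(2k-1)} + 1)/(p^i + 1); moreover p^{n'} - a = r(p^i - 1) divides p^n - 1. -/
theorem helper_stmt12 (q k : ℕ) (hq : 2 ≤ q) (hk : 2 ≤ k) :
    (q ^ 2 - 1) ∣ (q ^ (2 * k) - 1) ∧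
      (q + 1) ∣ (q ^ (2 * k - 1) + 1) ∧
      q ^ (2 * k - 1) % ((q ^ (2 * k) - 1) / (q ^ 2 - 1))
        = (q ^ (2 * k - 1) + 1) / (q + 1) ∧
      q ^ (2 * k - 1) - (q ^ (2 * k - 1) + 1) / (q + 1)
        = ((q ^ (2 * k) - 1) / (q ^ 2 - 1)) * (q - 1) ∧
      (q ^ (2 * k - 1) - (q ^ (2 * k - 1) + 1) / (q + 1))
        ∣ (q ^ (2 * k) - 1) := by
  have hq1 : 1 ≤ q := by omega
  have d1 : (q ^ 2 - 1) ∣ (q ^ (2 * k) - 1) := by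
    have h := Nat.sub_dvd_pow_sub_pow (q ^ 2) 1 k
    simpa [← pow_mul] using h
  have hodd : Odd (2 * k - 1) := ⟨k - 1, by omega⟩
  have d2 : (q + 1) ∣ (q ^ (2 * k - 1) + 1) := by
    have h := sub_dvd_pow_sub_pow (q : ℤ) (-1) (2 * k - 1)
    rw [hodd.neg_one_pow] at h
    have h2 : ((q : ℤ) + 1) ∣ ((q : ℤ) ^ (2 * k - 1) + 1) := by
      simpa [sub_neg_eq_add] using h
    exact_mod_cast h2
  set r := (q ^ (2 * k) - 1) / (q ^ 2 - 1) with hrdef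
  set a := (q ^ (2 * k - 1) + 1) / (q + 1) with hadef
  have h1 : r * (q ^ 2 - 1) = q ^ (2 * k) - 1 := Nat.div_mul_cancel d1
  have h2 : a * (q + 1) = q ^ (2 * k - 1) + 1 := Nat.div_mul_cancel d2
  have hp1 : 1 ≤ q ^ 2 := Nat.one_le_pow _ _ (by omega)
  have hp2 : 1 ≤ q ^ (2 * k) := Nat.one_le_pow _ _ (by omega)
  have h1z : (r : ℤ) * ((q : ℤ) ^ 2 - 1) = (q : ℤ) ^ (2 * k) - 1 := by
    zify [hp1, hp2] at h1; exact h1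
  have h2z : (a : ℤ) * ((q : ℤ) + 1) = (q : ℤ) ^ (2 * k - 1) + 1 := by exact_mod_cast h2
  have hpow : (q : ℤ) ^ (2 * k) = (q : ℤ) ^ (2 * k - 1) * q := by
    rw [← pow_succ]; congr 1; omega
  have h3 : q ^ (2 * k - 1) = r * (q - 1) + a := by
    apply Nat.eq_of_mul_eq_mul_right (show 0 < q + 1 by omega)
    zify [hq1]
    linear_combination -h1z - h2z - hpow
  have hqlt : q < q ^ (2 * k - 1) := by
    calc q = q ^ 1 := (pow_one q).symm
    _ < q ^ (2 * k - 1) := Nat.pow_lt_pow_right (by omega) (by omega)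
  have h4 : a < r := by
    have key : a * ((q + 1) * (q - 1)) < r * ((q + 1) * (q - 1)) := by
      zify [hq1]
      have hqltz : (q : ℤ) < (q : ℤ) ^ (2 * k - 1) := by exact_mod_cast hqlt
      nlinarith [h1z, h2z, hpow, hqltz]
    exact lt_of_mul_lt_mul_right key (Nat.zero_le _)
  have c4 : q ^ (2 * k - 1) - a = r * (q - 1) := by rw [h3, Nat.add_sub_cancel]
  refine ⟨d1, d2, ?_, c4, ?_⟩
  · rw [h3, Nat.mul_add_mod, Nat.mod_eq_of_lt h4]
  · rw [c4]
    refine ⟨q + 1, ?_⟩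
    zify [hq1, hp2]
    linear_combination -h1z

theorem stmt_12 (p k i : ℕ) (hp : p.Prime) (hk : 2 ≤ k) (hi : 1 ≤ i) :
    (p ^ (2 * i) - 1) ∣ (p ^ (2 * i * k) - 1) ∧
      (p ^ i + 1) ∣ (p ^ (i * (2 * k - 1)) + 1) ∧
      p ^ (i * (2 * k - 1)) % ((p ^ (2 * i * k) - 1) / (p ^ (2 * i) - 1))
        = (p ^ (i * (2 * k - 1)) + 1) / (p ^ i + 1) ∧
      p ^ (i * (2 * k - 1)) - (p ^ (i * (2 * k - 1)) + 1) / (p ^ i + 1)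
        = ((p ^ (2 * i * k) - 1) / (p ^ (2 * i) - 1)) * (p ^ i - 1) ∧
      (p ^ (i * (2 * k - 1)) - (p ^ (i * (2 * k - 1)) + 1) / (p ^ i + 1))
        ∣ (p ^ (2 * i * k) - 1) := by
  have hq : 2 ≤ p ^ i :=
    Nat.one_lt_pow (by omega) hp.one_lt
  rw [show 2 * i * k = i * (2 * k) by ring, show 2 * i = i * 2 by ring,
    pow_mul p i (2 * k), pow_mul p i 2, pow_mul p i (2 * k - 1)]
  exact helper_stmt12 (p ^ i) k hq hk
end

section
/- For every integer k > 1 and every integer n ≡ 5 (mod 6), the polynomial identity/divisibility (k^2 - k + 1) | (k^n + k - 1) holds; in particular k^n + k - 1 is composite for all k > 1 and n ≡ 5 (mod 6) with n ≥ 5. -/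
/-! Modulo `a ^ 2 - a + 1` we have `a ^ 3 = -1`, hence `a ^ 6 = 1` and, for `n ≡ 5 (mod 6)`,
`a ^ n = a ^ 5 = -a ^ 2 = 1 - a`. For a natural number `k > 1` the divisor `k ^ 2 - k + 1` lies
strictly between `1` and `k ^ n + k - 1` once `n ≥ 5`, so the latter is composite. -/

theorem sq_sub_self_add_one_dvd_pow_add_self_sub_one {R : Type*} [CommRing R] (a : R) {n : ℕ}
    (hn : n % 6 = 5) : a ^ 2 - a + 1 ∣ a ^ n + a - 1 := by
  obtain ⟨m, rfl⟩ : ∃ m, n = 6 * m + 5 := ⟨n / 6, by omega⟩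
  have h6 : a ^ 2 - a + 1 ∣ (a ^ 6) ^ m - 1 :=
    (Dvd.intro ((a + 1) * (a ^ 3 - 1)) (by ring) : a ^ 2 - a + 1 ∣ a ^ 6 - 1).trans <| by
      simpa using sub_dvd_pow_sub_pow (a ^ 6) 1 m
  have split : a ^ (6 * m + 5) + a - 1 =
      a ^ 5 * ((a ^ 6) ^ m - 1) + (a ^ 2 - a + 1) * (a ^ 3 + a ^ 2 - 1) := by
    ring
  rw [split]
  exact dvd_add (dvd_mul_of_dvd_right h6 _) (dvd_mul_right _ _)

theorem Nat.sq_sub_self_add_one_dvd_pow_add_self_sub_one {k n : ℕ} (hk : 0 < k) (hn : n % 6 = 5) :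
    k ^ 2 - k + 1 ∣ k ^ n + k - 1 := by
  have hkk : k ≤ k ^ 2 := Nat.le_self_pow two_ne_zero k
  have hkn : 1 ≤ k ^ n + k := by omega
  rw [← Int.natCast_dvd_natCast]
  push_cast [Nat.cast_sub hkk, Nat.cast_sub hkn]
  exact _root_.sq_sub_self_add_one_dvd_pow_add_self_sub_one (k : ℤ) hn

theorem stmt_15 (k n : ℕ) (hk : 1 < k) (hn : n % 6 = 5) :
    (k ^ 2 - k + 1) ∣ (k ^ n + k - 1) ∧
      (5 ≤ n → ¬ (k ^ n + k - 1).Prime) := by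
  have hdvd := Nat.sq_sub_self_add_one_dvd_pow_add_self_sub_one (by omega : 0 < k) hn
  refine ⟨hdvd, fun hn5 => Nat.not_prime_of_dvd_of_lt hdvd ?_ ?_⟩
  · have : k < k ^ 2 := lt_self_pow₀ hk one_lt_two
    omega
  · have : k ^ 2 < k ^ n := Nat.pow_lt_pow_right hk (by omega)
    omega
end

section
/- For every integer k > 1 and every integer n ≡ 2 (mod 6) with n > 2, (k^2 - k + 1) divides (k^n - k + 1), and hence k^n - k + 1 is composite. -/
/-! Since `k ^ 3 ≡ -1` modulo `k ^ 2 - k + 1`, we get `k ^ n ≡ k ^ 2 ≡ k - 1` whenever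
`n ≡ 2 (mod 6)`, so `k ^ 2 - k + 1` is a proper divisor of `k ^ n - k + 1` once `n > 2`. -/

theorem sq_sub_add_one_dvd_pow_sub_add_one {R : Type*} [CommRing R] (x : R) {n : ℕ}
    (hn : n % 6 = 2) : x ^ 2 - x + 1 ∣ x ^ n - x + 1 := by
  obtain ⟨m, rfl⟩ : ∃ m, n = 6 * m + 2 := ⟨n / 6, by omega⟩
  have h6 : x ^ 2 - x + 1 ∣ x ^ 6 - 1 := ⟨(x + 1) * (x ^ 3 - 1), by ring⟩
  have hpow : x ^ 2 - x + 1 ∣ (x ^ 6) ^ m - 1 := h6.trans (sub_one_dvd_pow_sub_one _ m)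
  have hsplit : x ^ (6 * m + 2) - x + 1 = x ^ 2 * ((x ^ 6) ^ m - 1) + (x ^ 2 - x + 1) := by
    ring
  rw [hsplit]
  exact dvd_add (hpow.mul_left _) dvd_rfl

theorem Nat.sq_sub_add_one_dvd_pow_sub_add_one (k : ℕ) {n : ℕ} (hn : n % 6 = 2) :
    k ^ 2 - k + 1 ∣ k ^ n - k + 1 := by
  have hk2 : k ≤ k ^ 2 := Nat.le_self_pow two_ne_zero k
  have hkn : k ≤ k ^ n := Nat.le_self_pow (by omega) k
  rw [← Int.natCast_dvd_natCast]
  push_cast [hk2, hkn]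
  exact _root_.sq_sub_add_one_dvd_pow_sub_add_one (k : ℤ) hn

theorem stmt_16 (k n : ℕ) (hk : 1 < k) (hn : n % 6 = 2) (hn2 : 2 < n) :
    (k ^ 2 - k + 1) ∣ (k ^ n - k + 1) ∧ ¬ (k ^ n - k + 1).Prime := by
  have hdvd := Nat.sq_sub_add_one_dvd_pow_sub_add_one k hn
  have hk_lt_sq : k < k ^ 2 := lt_self_pow₀ hk one_lt_two
  have hsq_lt_pow : k ^ 2 < k ^ n := Nat.pow_lt_pow_right hk hn2
  exact ⟨hdvd, Nat.not_prime_of_dvd_of_lt hdvd (by omega) (by omega)⟩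
end

section
/- Let k ≥ 2 and n > 2 be integers and p = k^n - k - (-1)^n. Then (k^n - k) divides p^n - 1 and (k^n - (-1)^n) divides p^n - 1; moreover gcd(k^n - k, k^n - (-1)^n) = k - (-1)^n, and hence r := (p^n - 1)(k - (-1)^n)/((k^n - k)(k^n - (-1)^n)) is an integer dividing p^n - 1. -/
/-!
Write `e = (-1)^n`, `a = k^n - k`, `b = k^n - e` and `p = a - e = b - k`. Since `x - y ∣ x^n - y^n`,
`a ∣ p^n - (-e)^n = p^n - 1` and `b ∣ p^n - (-k)^n`, while `(-k)^n - 1 = e (k^n - e)` is a multiple of `b`.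
Moreover `k - e ∣ k^n - e^n = b`, and `b = a + (k - e)`, so `gcd(a, b) = gcd(a, k - e) = k - e`.
Finally `a` and `b` divide `m = p^n - 1`, hence so does `lcm(a, b)`, and `r = m / lcm(a, b)` (up to a unit)
is the quotient in question because `gcd(a, b) · lcm(a, b)` is associated to `a b`.
-/

section NegOnePow

variable {R : Type*} [Monoid R] [HasDistribNeg R]

theorem neg_one_pow_pow_self (n : ℕ) : ((-1 : R) ^ n) ^ n = (-1) ^ n := by
  rcases Nat.even_or_odd n with h | h <;> simp [h.neg_one_pow]

theorem neg_neg_one_pow_pow_self (n : ℕ) : (-(-1 : R) ^ n) ^ n = 1 := by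
  rcases Nat.even_or_odd n with h | h <;> simp [h.neg_one_pow]

end NegOnePow

section Divisibility

variable {R : Type*} [CommRing R]

theorem dvd_sub_sub_neg_one_pow_pow_sub_one (a : R) (n : ℕ) :
    a ∣ (a - (-1) ^ n) ^ n - 1 := by
  simpa [neg_neg_one_pow_pow_self] using sub_dvd_pow_sub_pow (a - (-1) ^ n) (-(-1) ^ n) n

theorem pow_sub_neg_one_pow_dvd_pow_sub_sub_neg_one_pow_pow_sub_one (k : R) (n : ℕ) :
    k ^ n - (-1) ^ n ∣ (k ^ n - k - (-1) ^ n) ^ n - 1 := by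
  have hpow : k ^ n - (-1) ^ n ∣ (k ^ n - k - (-1) ^ n) ^ n - (-k) ^ n := by
    convert sub_dvd_pow_sub_pow (k ^ n - k - (-1) ^ n) (-k) n using 1
    ring
  have hneg : (-k) ^ n - 1 = (-1) ^ n * (k ^ n - (-1) ^ n) := by
    rw [neg_pow, mul_sub, ← pow_add, ← two_mul, pow_mul, neg_one_sq, one_pow]
  have := dvd_add hpow (Dvd.intro_left _ hneg.symm)
  rwa [sub_add_sub_cancel] at this

theorem sub_neg_one_pow_dvd_pow_sub_self (k : R) (n : ℕ) : k - (-1) ^ n ∣ k ^ n - k := by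
  have := dvd_sub (sub_dvd_pow_sub_pow k ((-1) ^ n) n) (dvd_refl (k - (-1) ^ n))
  rwa [neg_one_pow_pow_self, sub_sub_sub_cancel_right] at this

end Divisibility

theorem exists_mul_mul_eq_mul_gcd_of_dvd {α : Type*} [CommMonoidWithZero α] [GCDMonoid α]
    {a b m : α} (ha : a ∣ m) (hb : b ∣ m) : ∃ r, r * (a * b) = m * gcd a b ∧ r ∣ m := by
  obtain ⟨s, hs⟩ := lcm_dvd ha hb
  obtain ⟨u, hu⟩ := gcd_mul_lcm a b
  refine ⟨s * ↑u⁻¹, ?_, Units.mul_right_dvd.mpr (Dvd.intro_left _ hs.symm)⟩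
  rw [← hu, hs]
  calc s * ↑u⁻¹ * (gcd a b * lcm a b * u) = lcm a b * s * gcd a b * (↑u⁻¹ * u) := by ac_rfl
    _ = lcm a b * s * gcd a b := by rw [Units.inv_mul, mul_one]

theorem Int.gcd_self_add_eq_of_dvd {a d : ℤ} (hd : 0 ≤ d) (hda : d ∣ a) :
    (Int.gcd a (a + d) : ℤ) = d := by
  rw [Int.gcd_self_add_right, Int.gcd_eq_right hd hda]

theorem stmt_17_general (k n : ℕ) (hk : 2 ≤ k) :
    ((k : ℤ) ^ n - k) ∣ (((k : ℤ) ^ n - k - (-1) ^ n) ^ n - 1) ∧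
      ((k : ℤ) ^ n - (-1) ^ n) ∣ (((k : ℤ) ^ n - k - (-1) ^ n) ^ n - 1) ∧
      (Int.gcd ((k : ℤ) ^ n - k) ((k : ℤ) ^ n - (-1) ^ n) : ℤ) = (k : ℤ) - (-1) ^ n ∧
      ∃ r : ℤ,
        r * (((k : ℤ) ^ n - k) * ((k : ℤ) ^ n - (-1) ^ n))
            = (((k : ℤ) ^ n - k - (-1) ^ n) ^ n - 1) * ((k : ℤ) - (-1) ^ n) ∧
          r ∣ (((k : ℤ) ^ n - k - (-1) ^ n) ^ n - 1) := by
  have ha := dvd_sub_sub_neg_one_pow_pow_sub_one ((k : ℤ) ^ n - k) n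
  have hb := pow_sub_neg_one_pow_dvd_pow_sub_sub_neg_one_pow_pow_sub_one (k : ℤ) n
  have hd : (0 : ℤ) ≤ k - (-1) ^ n := by
    have : (-1 : ℤ) ^ n ≤ 1 := by rcases n.even_or_odd with h | h <;> simp [h.neg_one_pow]
    omega
  have hgcd : (Int.gcd ((k : ℤ) ^ n - k) ((k : ℤ) ^ n - (-1) ^ n) : ℤ) = k - (-1) ^ n := by
    rw [show (k : ℤ) ^ n - (-1) ^ n = (k ^ n - k) + (k - (-1) ^ n) by ring]
    exact Int.gcd_self_add_eq_of_dvd hd (sub_neg_one_pow_dvd_pow_sub_self _ n)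
  obtain ⟨r, hr, hrm⟩ := exists_mul_mul_eq_mul_gcd_of_dvd ha hb
  rw [← Int.coe_gcd, hgcd] at hr
  exact ⟨ha, hb, hgcd, r, hr, hrm⟩

theorem stmt_17 (k n : ℕ) (hk : 2 ≤ k) (hn : 2 < n) :
    ((k : ℤ) ^ n - k) ∣ (((k : ℤ) ^ n - k - (-1) ^ n) ^ n - 1) ∧
      ((k : ℤ) ^ n - (-1) ^ n) ∣ (((k : ℤ) ^ n - k - (-1) ^ n) ^ n - 1) ∧
      (Int.gcd ((k : ℤ) ^ n - k) ((k : ℤ) ^ n - (-1) ^ n) : ℤ) = (k : ℤ) - (-1) ^ n ∧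
      ∃ r : ℤ,
        r * (((k : ℤ) ^ n - k) * ((k : ℤ) ^ n - (-1) ^ n))
            = (((k : ℤ) ^ n - k - (-1) ^ n) ^ n - 1) * ((k : ℤ) - (-1) ^ n) ∧
          r ∣ (((k : ℤ) ^ n - k - (-1) ^ n) ^ n - 1) :=
  stmt_17_general k n hk
end

section
/- The polynomial L(X) = X^8 - X^3 over F_{2^4} has exactly 6 = 2^3 - 3 + 1 distinct roots in F_{2^4}, all elements of F_{2^4} (namely 0 and the fifth roots of unity), since 2^3 - 3 = 5 divides 2^4 - 1 = 15; and its quality parameter β = log_2(3)·4/9 ≈ 0.70 is strictly less than 3/4. -/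
/-!
Factor `X ^ 8 - X ^ 3 = X ^ 3 (X ^ 5 - 1)`: its roots are `0` together with the fifth roots of
unity. The unit group of `𝔽₁₆` is cyclic of order `15`, which `5` divides, so it contains a
primitive fifth root of unity and hence exactly five fifth roots of unity. The bound on `β`
amounts to `3 ^ 16 < 2 ^ 27`.
-/

open Polynomial

theorem FiniteField.exists_isPrimitiveRoot_of_dvd {K : Type*} [Field K] [Finite K] {n : ℕ}
    (hn : n ∣ Nat.card K - 1) : ∃ ζ : K, IsPrimitiveRoot ζ n := by
  obtain ⟨g, hg⟩ := IsCyclic.exists_ofOrder_eq_natCard (α := Kˣ)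
  rw [Nat.card_units] at hg
  refine ⟨((g ^ (orderOf g / n) : Kˣ) : K), IsPrimitiveRoot.coe_units_iff.mpr ?_⟩
  exact IsPrimitiveRoot.iff_orderOf.mpr (orderOf_pow_orderOf_div (orderOf_pos g).ne' (hg ▸ hn))

theorem eval_X_pow_sub_X_pow_eq_zero_iff {K : Type*} [Field K] {n k : ℕ} (hk : k ≠ 0)
    (hkn : k ≤ n) {x : K} : eval x (X ^ n - X ^ k) = 0 ↔ x = 0 ∨ x ^ (n - k) = 1 := by
  have hfactor : x ^ n - x ^ k = x ^ k * (x ^ (n - k) - 1) := by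
    rw [mul_sub, ← pow_add, Nat.add_sub_cancel' hkn, mul_one]
  simp only [eval_sub, eval_pow, eval_X]
  rw [hfactor, mul_eq_zero, pow_eq_zero_iff hk, sub_eq_zero]

theorem ncard_setOf_eval_X_pow_sub_X_pow_eq_zero {K : Type*} [Field K] {n k : ℕ} (hk : k ≠ 0)
    (hkn : k < n) {ζ : K} (hζ : IsPrimitiveRoot ζ (n - k)) :
    {x : K | eval x (X ^ n - X ^ k) = 0}.ncard = n - k + 1 := by
  classical
  have hpos : 0 < n - k := Nat.sub_pos_of_lt hkn
  have hroots : {x : K | eval x (X ^ n - X ^ k) = 0} =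
      ↑(insert 0 (nthRootsFinset (n - k) (1 : K))) := by
    ext x
    simp only [Finset.coe_insert, Set.mem_insert_iff, Finset.mem_coe, mem_nthRootsFinset hpos]
    exact eval_X_pow_sub_X_pow_eq_zero_iff hk hkn.le
  rw [hroots, Set.ncard_coe_finset, Finset.card_insert_of_notMem, hζ.card_nthRootsFinset]
  simp [mem_nthRootsFinset hpos, hpos.ne']

theorem Real.logb_two_three_lt : Real.logb 2 3 < 27 / 16 := by
  have h : Real.logb 2 (3 ^ 16) < 27 := by
    rw [Real.logb_lt_iff_lt_rpow one_lt_two (by norm_num)]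
    norm_num
  rw [Real.logb_pow] at h
  push_cast at h
  linarith

theorem stmt_18 :
    ({x : GaloisField 2 4 |
        Polynomial.eval x
          (Polynomial.X ^ 8 - Polynomial.X ^ 3 : Polynomial (GaloisField 2 4)) = 0}.ncard
        = 6) ∧
      (2 ^ 3 - 3) ∣ (2 ^ 4 - 1) ∧
      Real.logb 2 3 * 4 / 3 ^ 2 < 3 / 4 := by
  have hcard : Nat.card (GaloisField 2 4) = 16 := GaloisField.card 2 4 (by norm_num)
  obtain ⟨ζ, hζ⟩ :=
    FiniteField.exists_isPrimitiveRoot_of_dvd (K := GaloisField 2 4) (n := 8 - 3)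
      (by rw [hcard]; norm_num)
  refine ⟨ncard_setOf_eval_X_pow_sub_X_pow_eq_zero (by norm_num) (by norm_num) hζ, by norm_num, ?_⟩
  linarith [Real.logb_two_three_lt]
end
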